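/- Let m ∈ 𝒪 with m ≠ 0. Then the index of U⁰[m] in U is [U : U⁰[m]] = N(m𝒪) · ∏_{𝔭 prime ideal, 𝔭 | m𝒪} (1 + N(𝔭)⁻¹). -/

import Mathlib

open Matrix

/-- The congruence subgroup `U⁰[m] = {(a b; c d) ∈ U : b ∈ m𝒪}` of the unimodular group
`U = GL₂(𝒪)`. -/
def U0 {O : Type*} [CommRing O] (m : O) : Subgroup (GL (Fin 2) O) where
  carrier := {g | (g : Matrix (Fin 2) (Fin 2) O) 0 1 ∈ Ideal.span {m}}
  one_mem' := by
    simp [Ideal.zero_mem, Matrix.one_apply]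
  mul_mem' := by
    intro g h hg hh
    have : ((g * h : GL (Fin 2) O) : Matrix (Fin 2) (Fin 2) O) 0 1 =
        (g : Matrix (Fin 2) (Fin 2) O) 0 0 * (h : Matrix (Fin 2) (Fin 2) O) 0 1 +
          (g : Matrix (Fin 2) (Fin 2) O) 0 1 * (h : Matrix (Fin 2) (Fin 2) O) 1 1 := by
      simp [Units.val_mul, Matrix.mul_apply, Fin.sum_univ_two]
    simp only [Set.mem_setOf_eq] at *
    rw [this]
    exact Ideal.add_mem _ (Ideal.mul_mem_left _ _ hh) (Ideal.mul_mem_right _ _ hg)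
  inv_mem' := by
    intro g hg
    simp only [Set.mem_setOf_eq] at *
    have h1 : ((g⁻¹ : GL (Fin 2) O) : Matrix (Fin 2) (Fin 2) O) =
        ((g : Matrix (Fin 2) (Fin 2) O))⁻¹ := Matrix.coe_units_inv g
    rw [h1, Matrix.inv_def, Matrix.adjugate_fin_two]
    simp only [Matrix.smul_apply, Matrix.cons_val', Matrix.cons_val_one, Matrix.head_cons,
      Matrix.cons_val_zero, Matrix.empty_val', Matrix.cons_val_fin_one, Matrix.head_fin_const,
      smul_eq_mul]
    exact Ideal.mul_mem_left _ _ (neg_mem hg)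

/-!
`GL₂(𝒪)` acts on the projective line `P¹(𝒪/m)` through reduction mod `m`, and `U⁰[m]` is the
stabilizer of the line `[0 : 1]`. The action is transitive: a unimodular pair mod `m` lifts
(by the Chinese remainder theorem in the Dedekind domain `𝒪`) to a coprime pair `(b, d)`, which is
the second column of a matrix in `SL₂(𝒪)`. Hence `[U : U⁰[m]] = |P¹(𝒪/m)|`.

Since `Rˣ` acts freely on unimodular vectors, `|P¹(R)| · |Rˣ|` is the number of unimodular pairs,
which makes `|P¹|` multiplicative over `𝒪/m ≅ ∏ 𝒪/𝔭^e`. For a finite local ring `A` with maximal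
ideal `𝔪` and residue field `k`, a pair is unimodular iff it does not lie in `𝔪 × 𝔪`, so
`|P¹(A)| = |A| + |𝔪| = |A| (1 + |k|⁻¹)`.
-/

section ProjectiveSpace

variable (ι R : Type*) [Fintype ι] [CommRing R]

def unimodularVectors : SubMulAction Rˣ (ι → R) where
  carrier := {v | ∃ w, w ⬝ᵥ v = 1}
  smul_mem' := by
    rintro u v ⟨w, hw⟩
    exact ⟨(↑u⁻¹ : R) • w, by rw [Units.smul_def, dotProduct_smul, smul_dotProduct, smul_smul,
      Units.mul_inv, one_smul, hw]⟩

abbrev ProjectiveSpace : Type _ := Quotient (MulAction.orbitRel Rˣ (unimodularVectors ι R))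

variable {ι R}

def unimodularVectors.single [DecidableEq ι] (i : ι) : unimodularVectors ι R :=
  ⟨Pi.single i 1, Pi.single i 1, by simp⟩

@[simp]
lemma unimodularVectors.coe_single [DecidableEq ι] (i : ι) :
    ((unimodularVectors.single i : unimodularVectors ι R) : ι → R) = Pi.single i 1 := rfl

lemma unimodularVectors.stabilizer_eq_bot (v : unimodularVectors ι R) :
    MulAction.stabilizer Rˣ v = ⊥ := by
  obtain ⟨w, hw⟩ := v.2
  refine (Subgroup.eq_bot_iff_forall _).2 fun u hu => Units.ext ?_
  have huv : (u : R) • (v : ι → R) = v := congrArg Subtype.val hu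
  rw [Units.val_one, ← mul_one (u : R), ← hw, ← smul_eq_mul, ← dotProduct_smul, huv]

variable (ι R) in
lemma card_unimodularVectors :
    Nat.card (unimodularVectors ι R) = Nat.card (ProjectiveSpace ι R) * Nat.card Rˣ := by
  rw [Nat.card_congr
      (MulAction.selfEquivOrbitsQuotientProd unimodularVectors.stabilizer_eq_bot),
    Nat.card_prod]

lemma map_mem_unimodularVectors {S : Type*} [CommRing S] (f : R →+* S) {v : ι → R}
    (hv : v ∈ unimodularVectors ι R) : f ∘ v ∈ unimodularVectors ι S := by
  obtain ⟨w, hw⟩ := hv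
  exact ⟨f ∘ w, by rw [← RingHom.map_dotProduct, hw, map_one]⟩

lemma pi_mem_unimodularVectors {κ : Type*} {A : κ → Type*} [∀ j, CommRing (A j)]
    {v : ι → ∀ j, A j} (hv : ∀ j, (fun i => v i j) ∈ unimodularVectors ι (A j)) :
    v ∈ unimodularVectors ι (∀ j, A j) := by
  choose w hw using hv
  exact ⟨fun i j => w j i, funext fun j => by simpa [dotProduct] using hw j⟩

def unimodularVectorsEquivPi {κ : Type*} {A : κ → Type*} [∀ j, CommRing (A j)]
    (e : R ≃+* ∀ j, A j) : unimodularVectors ι R ≃ ∀ j, unimodularVectors ι (A j) where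
  toFun v j := ⟨fun i => e (v.1 i) j,
    map_mem_unimodularVectors ((Pi.evalRingHom A j).comp e.toRingHom) v.2⟩
  invFun w := ⟨fun i => e.symm fun j => (w j).1 i,
    map_mem_unimodularVectors e.symm.toRingHom (pi_mem_unimodularVectors fun j => (w j).2)⟩
  left_inv v := by ext; simp
  right_inv w := by ext; simp

lemma card_projectiveSpace_of_ringEquiv_pi [Finite R] {κ : Type*} [Fintype κ] {A : κ → Type*}
    [∀ j, CommRing (A j)] (e : R ≃+* ∀ j, A j) :
    Nat.card (ProjectiveSpace ι R) = ∏ j, Nat.card (ProjectiveSpace ι (A j)) := by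
  have hunits : Nat.card Rˣ = ∏ j, Nat.card (A j)ˣ := by
    rw [← Nat.card_pi]
    exact Nat.card_congr ((Units.mapEquiv e.toMulEquiv).trans MulEquiv.piUnits).toEquiv
  have h := card_unimodularVectors ι R
  rw [Nat.card_congr (unimodularVectorsEquivPi e), Nat.card_pi] at h
  simp only [card_unimodularVectors, Finset.prod_mul_distrib, ← hunits] at h
  exact Nat.eq_of_mul_eq_mul_right Nat.card_pos h.symm

section Action

variable [DecidableEq ι] {S : Type*} [CommRing S] [Algebra S R]

lemma mulVec_mem_unimodularVectors (g : GL ι R) {v : ι → R} (hv : v ∈ unimodularVectors ι R) :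
    (g : Matrix ι ι R) *ᵥ v ∈ unimodularVectors ι R := by
  obtain ⟨w, hw⟩ := hv
  refine ⟨w ᵥ* (g⁻¹ : GL ι R), ?_⟩
  rw [← dotProduct_mulVec, mulVec_mulVec, ← Units.val_mul, inv_mul_cancel, Units.val_one,
    one_mulVec, hw]

-- `GL ι S` acts through `algebraMap S R`, so that `GL₂(𝒪)` acts directly on lines over `𝒪/m`.
instance : MulAction (GL ι S) (unimodularVectors ι R) where
  smul g v := ⟨(GeneralLinearGroup.map (algebraMap S R) g : Matrix ι ι R) *ᵥ v,
    mulVec_mem_unimodularVectors _ v.2⟩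
  one_smul v := Subtype.ext <| by
    change ((GeneralLinearGroup.map (algebraMap S R) 1 : GL ι R) : Matrix ι ι R) *ᵥ _ = _
    rw [map_one, Units.val_one, one_mulVec]
  mul_smul g h v := Subtype.ext <| by
    change ((GeneralLinearGroup.map (algebraMap S R) (g * h) : GL ι R) : Matrix ι ι R) *ᵥ _ = _
    rw [map_mul, Units.val_mul, ← mulVec_mulVec]
    rfl

lemma unimodularVectors.coe_smul (g : GL ι S) (v : unimodularVectors ι R) :
    ((g • v : unimodularVectors ι R) : ι → R) = (g : Matrix ι ι S).map (algebraMap S R) *ᵥ v :=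
  rfl

lemma unimodularVectors.coe_smul_single (g : GL ι S) (j : ι) :
    ((g • unimodularVectors.single j : unimodularVectors ι R) : ι → R) =
      fun i => algebraMap S R ((g : Matrix ι ι S) i j) := by
  ext i
  simp [unimodularVectors.coe_smul]

instance : SMulCommClass (GL ι S) Rˣ (unimodularVectors ι R) where
  smul_comm g u v := Subtype.ext <| by
    simp [unimodularVectors.coe_smul, Units.smul_def, mulVec_smul]

instance : MulAction (GL ι S) (ProjectiveSpace ι R) where
  smul g := Quotient.map (g • ·) fun v w h => by
    obtain ⟨u, rfl⟩ := MulAction.mem_orbit_iff.1 (MulAction.orbitRel_apply.1 h)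
    exact MulAction.orbitRel_apply.2 (MulAction.mem_orbit_iff.2 ⟨u, (smul_comm g u w).symm⟩)
  one_smul := Quotient.ind fun v => congrArg _ (one_smul _ v)
  mul_smul g h := Quotient.ind fun v => congrArg _ (mul_smul g h v)

lemma ProjectiveSpace.smul_mk (g : GL ι S) (v : unimodularVectors ι R) :
    g • (⟦v⟧ : ProjectiveSpace ι R) = ⟦g • v⟧ :=
  rfl

end Action

end ProjectiveSpace

section IsLocalRing

open IsLocalRing

variable {ι : Type*} [Fintype ι] {A : Type*} [CommRing A] [IsLocalRing A]

lemma mem_unimodularVectors_iff_exists_isUnit {v : ι → A} :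
    v ∈ unimodularVectors ι A ↔ ∃ i, IsUnit (v i) := by
  classical
  constructor
  · rintro ⟨w, hw⟩
    by_contra! h
    refine (maximalIdeal.isMaximal A).ne_top ((Ideal.eq_top_iff_one _).2 ?_)
    exact hw ▸ Ideal.sum_mem _ fun i _ => Ideal.mul_mem_left _ _ ((mem_maximalIdeal _).2 (h i))
  · rintro ⟨i, hi⟩
    exact ⟨Pi.single i ↑hi.unit⁻¹, by simp [single_dotProduct]⟩

lemma card_eq_card_residueField_mul :
    Nat.card A = Nat.card (ResidueField A) * Nat.card (maximalIdeal A) :=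
  AddSubgroup.card_eq_card_quotient_mul_card_addSubgroup (maximalIdeal A).toAddSubgroup

variable [Finite A]

lemma card_units_add_card_maximalIdeal :
    Nat.card Aˣ + Nat.card (maximalIdeal A) = Nat.card A := by
  classical
  let unitsEquiv : Aˣ ≃ {x : A // x ∉ maximalIdeal A} :=
    { toFun u := ⟨u, notMem_maximalIdeal.2 u.isUnit⟩
      invFun x := (notMem_maximalIdeal.1 x.2).unit
      left_inv _ := Units.ext rfl
      right_inv _ := rfl }
  rw [← Nat.card_congr (Equiv.sumCompl (· ∈ maximalIdeal A)), Nat.card_sum,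
    Nat.card_congr unitsEquiv, add_comm]

variable (ι) in
lemma card_projectiveSpace_mul_card_units_add :
    Nat.card (ProjectiveSpace ι A) * Nat.card Aˣ + Nat.card (maximalIdeal A) ^ Fintype.card ι =
      Nat.card A ^ Fintype.card ι := by
  classical
  have hcompl : {v : ι → A // ¬ ∀ i, v i ∈ maximalIdeal A} ≃ unimodularVectors ι A :=
    Equiv.subtypeEquivRight fun v => by
      simp only [not_forall, notMem_maximalIdeal]
      exact mem_unimodularVectors_iff_exists_isUnit.symm
  rw [← card_unimodularVectors, ← Nat.card_congr hcompl, ← Nat.card_eq_fintype_card,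
    ← Nat.card_fun, ← Nat.card_fun,
    ← Nat.card_congr (Equiv.subtypePiEquivPi (p := fun _ x => x ∈ maximalIdeal A)), add_comm,
    ← Nat.card_sum, Nat.card_congr (Equiv.sumCompl _)]

lemma card_projectiveSpace_fin_two :
    Nat.card (ProjectiveSpace (Fin 2) A) = Nat.card A + Nat.card (maximalIdeal A) := by
  have h := card_projectiveSpace_mul_card_units_add (Fin 2) (A := A)
  rw [Fintype.card_fin, ← card_units_add_card_maximalIdeal (A := A)] at h
  rw [← card_units_add_card_maximalIdeal (A := A)]
  refine Nat.eq_of_mul_eq_mul_right (Nat.card_pos (α := Aˣ)) ?_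
  nlinarith

lemma card_projectiveSpace_fin_two_eq_mul :
    (Nat.card (ProjectiveSpace (Fin 2) A) : ℚ) =
      Nat.card A * (1 + (Nat.card (ResidueField A) : ℚ)⁻¹) := by
  have : Finite (ResidueField A) := .of_surjective _ residue_surjective
  have hk : (Nat.card (ResidueField A) : ℚ) ≠ 0 := Nat.cast_ne_zero.2 Nat.card_pos.ne'
  rw [card_projectiveSpace_fin_two, card_eq_card_residueField_mul]
  push_cast
  field_simp

end IsLocalRing

section QuotientPow

variable {R : Type*} [CommRing R] (M : Ideal R) [M.IsMaximal] (e : ℕ) [NeZero e]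

instance Ideal.Quotient.isLocalRing_pow : IsLocalRing (R ⧸ M ^ e) := by
  have : Nontrivial (R ⧸ M ^ e) := Ideal.Quotient.nontrivial_iff.2
    (ne_top_of_le_ne_top Ideal.IsPrime.ne_top' (Ideal.pow_le_self NeZero.out))
  refine .of_isUnit_or_isUnit_one_sub_self fun x => ?_
  obtain ⟨a, rfl⟩ := Ideal.Quotient.mk_surjective x
  rw [← map_one (Ideal.Quotient.mk _), ← map_sub,
    Ideal.Quotient.isUnit_mk_pow_iff_notMem M NeZero.out,
    Ideal.Quotient.isUnit_mk_pow_iff_notMem M NeZero.out, ← not_and_or]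
  exact fun h => Ideal.IsPrime.ne_top'
    ((Ideal.eq_top_iff_one M).2 (by simpa using M.add_mem h.1 h.2))

lemma Ideal.Quotient.card_residueField_pow :
    Nat.card (IsLocalRing.ResidueField (R ⧸ M ^ e)) = Nat.card (R ⧸ M) := by
  let φ := (IsLocalRing.residue (R ⧸ M ^ e)).comp (Ideal.Quotient.mk (M ^ e))
  have hφ : Function.Surjective φ :=
    IsLocalRing.residue_surjective.comp Ideal.Quotient.mk_surjective
  have hker : RingHom.ker φ = M := by
    ext a
    simp [φ, IsLocalRing.residue_eq_zero_iff, Ideal.Quotient.isUnit_mk_pow_iff_notMem M NeZero.out]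
  exact Nat.card_congr
    ((Ideal.quotEquivOfEq hker.symm).trans (RingHom.quotientKerEquivOfSurjective hφ)).symm

lemma card_projectiveSpace_quotient_pow [Finite (R ⧸ M ^ e)] :
    (Nat.card (ProjectiveSpace (Fin 2) (R ⧸ M ^ e)) : ℚ) =
      Nat.card (R ⧸ M ^ e) * (1 + (Nat.card (R ⧸ M) : ℚ)⁻¹) := by
  rw [card_projectiveSpace_fin_two_eq_mul, Ideal.Quotient.card_residueField_pow]

end QuotientPow

lemma U0_eq_stabilizer {O : Type*} [CommRing O] (m : O) :
    U0 m = MulAction.stabilizer (GL (Fin 2) O)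
      (⟦unimodularVectors.single 1⟧ : ProjectiveSpace (Fin 2) (O ⧸ Ideal.span {m})) := by
  ext g
  rw [MulAction.mem_stabilizer_iff, ProjectiveSpace.smul_mk, Quotient.eq,
    MulAction.orbitRel_apply, MulAction.mem_orbit_iff]
  change (g : Matrix (Fin 2) (Fin 2) O) 0 1 ∈ Ideal.span {m} ↔ _
  have hcol := unimodularVectors.coe_smul_single (R := O ⧸ Ideal.span {m}) g 1
  rw [← Ideal.Quotient.eq_zero_iff_mem]
  constructor
  · intro h01
    have hdet := (isUnits_det_units g).map (Ideal.Quotient.mk (Ideal.span {m}))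
    rw [det_fin_two, map_sub, map_mul, map_mul, h01, zero_mul, sub_zero] at hdet
    refine ⟨(isUnit_of_mul_isUnit_right hdet).unit, Subtype.ext (funext fun i => ?_)⟩
    fin_cases i <;> simp [hcol, h01, Units.smul_def]
  · rintro ⟨u, hu⟩
    simpa [hcol, Units.smul_def, eq_comm] using congrFun (congrArg Subtype.val hu) 0

section Dedekind

open UniqueFactorizationMonoid

variable {O : Type*} [CommRing O] [IsDedekindDomain O]

-- By CRT, `t ≡ 1` modulo the primes containing `a` and `b`, and `t ≡ 0` modulo the other primes
-- containing `a`; then `b + m t` avoids every prime containing `a`.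
lemma exists_isCoprime_add_mul {a b m : O} (ha : a ≠ 0) (h : Ideal.span {a, b, m} = ⊤) :
    ∃ t, IsCoprime a (b + m * t) := by
  classical
  have ha' : Ideal.span {a} ≠ ⊥ := by simpa using ha
  set s := (normalizedFactors (Ideal.span {a})).toFinset
  have hs : ∀ P, P ∈ s ↔ P.IsPrime ∧ a ∈ P := fun P => by
    rw [Multiset.mem_toFinset, Ideal.mem_normalizedFactors_iff ha',
      Ideal.span_singleton_le_iff_mem]
  obtain ⟨t, ht⟩ := IsDedekindDomain.exists_forall_sub_mem_ideal (s := s) id (fun _ => 1)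
    (fun P hP => prime_of_normalized_factor P (Multiset.mem_toFinset.1 hP)) (fun _ _ _ _ => id)
    (fun P => if b ∈ (P : Ideal O) then 1 else 0)
  refine ⟨t, (Ideal.isCoprime_span_singleton_iff _ _).1 (Ideal.isCoprime_iff_sup_eq.2 ?_)⟩
  by_contra hne
  obtain ⟨P, hPmax, hle⟩ := Ideal.exists_le_maximal _ hne
  have haP : a ∈ P := hle (Ideal.mem_sup_left (Ideal.mem_span_singleton_self a))
  have hbtP : b + m * t ∈ P := hle (Ideal.mem_sup_right (Ideal.mem_span_singleton_self _))
  have htP := ht P ((hs P).2 ⟨hPmax.isPrime, haP⟩)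
  simp only [id, pow_one] at htP
  split_ifs at htP with hbP
  · have hmP : m ∈ P := by
      have : m = (b + m * t) - b - m * (t - 1) := by ring
      exact this ▸ P.sub_mem (P.sub_mem hbtP hbP) (P.mul_mem_left m htP)
    refine hPmax.ne_top (top_le_iff.1 (h ▸ Ideal.span_le.2 ?_))
    simp [Set.insert_subset_iff, haP, hbP, hmP]
  · refine hbP ?_
    have : b = (b + m * t) - m * (t - 0) := by ring
    exact this ▸ P.sub_mem hbtP (P.mul_mem_left m htP)

lemma exists_isCoprime_lift_of_mem_unimodularVectors (m : O) {v : Fin 2 → O ⧸ Ideal.span {m}}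
    (hv : v ∈ unimodularVectors (Fin 2) (O ⧸ Ideal.span {m})) :
    ∃ a b : O, IsCoprime a b ∧ Ideal.Quotient.mk _ a = v 0 ∧ Ideal.Quotient.mk _ b = v 1 := by
  obtain ⟨a, ha⟩ := Ideal.Quotient.mk_surjective (v 0)
  obtain ⟨b, hb⟩ := Ideal.Quotient.mk_surjective (v 1)
  obtain ⟨w, hw⟩ := hv
  obtain ⟨x, hx⟩ := Ideal.Quotient.mk_surjective (w 0)
  obtain ⟨y, hy⟩ := Ideal.Quotient.mk_surjective (w 1)
  obtain ⟨z, hz⟩ : ∃ z, z * m = x * a + y * b - 1 := by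
    refine Ideal.mem_span_singleton'.1 (Ideal.Quotient.eq_zero_iff_mem.1 ?_)
    simp [ha, hb, hx, hy, ← hw, dotProduct, Fin.sum_univ_two]
  by_cases ha0 : a = 0
  · subst ha0
    exact ⟨m, b, ⟨-z, y, by linear_combination -hz⟩, by simp [← ha], hb⟩
  · have hspan : Ideal.span {a, b, m} = ⊤ := by
      rw [Ideal.eq_top_iff_one, ← show x * a + y * b + (-z) * m = 1 by linear_combination -hz]
      refine add_mem (add_mem ?_ ?_) ?_ <;>
        exact Ideal.mul_mem_left _ _ (Ideal.subset_span (by simp))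
    obtain ⟨t, ht⟩ := exists_isCoprime_add_mul ha0 hspan
    exact ⟨a, b + m * t, ht, ha, by simp [hb]⟩

instance (m : O) :
    MulAction.IsPretransitive (GL (Fin 2) O) (ProjectiveSpace (Fin 2) (O ⧸ Ideal.span {m})) := by
  refine .of_orbit (x₀ := ⟦unimodularVectors.single 1⟧) (Quotient.ind fun v => ?_)
  obtain ⟨a, b, ⟨x, y, hxy⟩, ha, hb⟩ := exists_isCoprime_lift_of_mem_unimodularVectors m v.2
  let g : SpecialLinearGroup (Fin 2) O :=
    ⟨!![y, a; -x, b], by rw [det_fin_two_of]; linear_combination hxy⟩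
  have hg : ((g : GL (Fin 2) O) : Matrix (Fin 2) (Fin 2) O) = !![y, a; -x, b] := rfl
  refine ⟨g, congrArg _ (Subtype.ext (funext fun i => ?_))⟩
  fin_cases i <;> simp [unimodularVectors.coe_smul_single, hg, ha, hb]

lemma index_U0 (m : O) :
    (U0 m).index = Nat.card (ProjectiveSpace (Fin 2) (O ⧸ Ideal.span {m})) := by
  rw [U0_eq_stabilizer, MulAction.index_stabilizer_of_transitive]

lemma card_projectiveSpace_quotient {I : Ideal O} (hI : I ≠ ⊥) [Finite (O ⧸ I)] :
    (Nat.card (ProjectiveSpace (Fin 2) (O ⧸ I)) : ℚ) =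
      Nat.card (O ⧸ I) *
        ∏ᶠ (P : Ideal O) (_ : P.IsPrime ∧ I ≤ P), (1 + (Nat.card (O ⧸ P) : ℚ)⁻¹) := by
  classical
  let e := IsDedekindDomain.quotientEquivPiFactors hI
  have hs : ∀ P, P ∈ (factors I).toFinset ↔ P.IsPrime ∧ I ≤ P := fun P => by
    rw [Multiset.mem_toFinset, factors_eq_normalizedFactors, Ideal.mem_normalizedFactors_iff hI]
  have hlocal : ∀ P : (factors I).toFinset,
      (Nat.card (ProjectiveSpace (Fin 2) (O ⧸ (P : Ideal O) ^ (factors I).count P.1)) : ℚ) =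
        Nat.card (O ⧸ (P : Ideal O) ^ (factors I).count P.1) *
          (1 + (Nat.card (O ⧸ (P : Ideal O)) : ℚ)⁻¹) := by
    rintro ⟨P, hP⟩
    obtain ⟨hPprime, hIP⟩ := (hs P).1 hP
    have : P.IsMaximal := hPprime.isMaximal (ne_bot_of_le_ne_bot hI hIP)
    have : NeZero ((factors I).count P) := ⟨Multiset.count_ne_zero.2 (Multiset.mem_toFinset.1 hP)⟩
    have : Finite (O ⧸ P ^ (factors I).count P) :=
      .of_surjective (fun x => e x ⟨P, hP⟩) ((Function.surjective_eval _).comp e.surjective)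
    exact card_projectiveSpace_quotient_pow P _
  rw [card_projectiveSpace_of_ringEquiv_pi e, Nat.card_congr e.toEquiv, Nat.card_pi,
    finprod_cond_eq_prod_of_cond_iff _ fun {P} _ => (hs P).symm]
  push_cast
  rw [← Finset.prod_coe_sort (factors I).toFinset, ← Finset.prod_mul_distrib]
  exact Finset.prod_congr rfl fun P _ => hlocal P

end Dedekind

theorem stmt13_general {O : Type*} [CommRing O] [IsDedekindDomain O]
    -- `𝒪` is norm-finite:
    (hnf : ∀ x : O, x ≠ 0 → Finite (O ⧸ Ideal.span {x}))
    (m : O) (hm : m ≠ 0) :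
    ((U0 m).index : ℚ) =
      (Nat.card (O ⧸ Ideal.span {m}) : ℚ) *
        -- product over all prime ideals `𝔭` dividing `m𝒪`:
        ∏ᶠ (𝔭 : Ideal O) (_ : 𝔭.IsPrime ∧ Ideal.span {m} ≤ 𝔭),
          (1 + (Nat.card (O ⧸ 𝔭) : ℚ)⁻¹) := by
  have : Finite (O ⧸ Ideal.span {m}) := hnf m hm
  rw [index_U0, card_projectiveSpace_quotient (by simpa using hm)]

theorem stmt13 {O : Type*} [CommRing O] [IsDomain O] [IsDedekindDomain O]
    -- `𝒪` is norm-finite: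
    (hnf : ∀ x : O, x ≠ 0 → Finite (O ⧸ Ideal.span {x}))
    (m : O) (hm : m ≠ 0) :
    ((U0 m).index : ℚ) =
      (Nat.card (O ⧸ Ideal.span {m}) : ℚ) *
        -- product over all prime ideals `𝔭` dividing `m𝒪`:
        ∏ᶠ (𝔭 : Ideal O) (_ : 𝔭.IsPrime ∧ Ideal.span {m} ≤ 𝔭),
          (1 + (Nat.card (O ⧸ 𝔭) : ℚ)⁻¹) :=
  stmt13_general hnf m hm
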